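/- arXiv:2210.07632 — 2 statements merged into one kernel-verified Lean document; each statement's English description precedes it below -/
import Mathlib

section
/- Let f(S) = N(S)/D(S) where N(S) = ∑_{j=1}^m μ_j (1 − ∏_{r∈S}(1 − p_{rj})) and D(S) = ∑_{r∈S} λ_r, with μ_j ≥ 0, λ_r > 0, p_{rj} ∈ [0,1]. If Q_1, Q_2 are nonempty subsets achieving the minimum of f among nonempty subsets and Q_1 ∩ Q_2 ≠ ∅, then Q_1 ∩ Q_2 and Q_1 ∪ Q_2 also achieve the minimum. -/
private lemma aux_prod_subset {α : Type*} [DecidableEq α] (A B : Finset α) (q : α → ℝ)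
    (h0 : ∀ r, 0 ≤ q r) (h1 : ∀ r, q r ≤ 1) (hAB : A ⊆ B) :
    ∏ r ∈ B, q r ≤ ∏ r ∈ A, q r := by
  rw [← Finset.prod_sdiff hAB]
  have h2 : ∏ r ∈ B \ A, q r ≤ 1 :=
    Finset.prod_le_one (fun i _ => h0 i) (fun i _ => h1 i)
  have h3 : 0 ≤ ∏ r ∈ A, q r := Finset.prod_nonneg fun i _ => h0 i
  nlinarith [Finset.prod_nonneg (fun i (_ : i ∈ B \ A) => h0 i)]

private lemma aux_ineq (x y a b : ℝ) (hx : 0 ≤ x) (hy : 0 ≤ y) (ha : 0 ≤ a) (hb : 0 ≤ b)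
    (hax : a ≤ x) (hbx : b ≤ x) (hprod : x * y = a * b) : a + b ≤ x + y := by
  rcases eq_or_lt_of_le hx with h | h
  · nlinarith
  · nlinarith [mul_nonneg (sub_nonneg.2 hax) (sub_nonneg.2 hbx)]

theorem stmt_14 (n m : ℕ) (p : Fin n → Fin m → ℝ) (mu : Fin m → ℝ) (lam : Fin n → ℝ)
    (hp : ∀ r j, 0 ≤ p r j ∧ p r j ≤ 1) (hmu : ∀ j, 0 ≤ mu j)
    (hlam : ∀ r, 0 < lam r)
    (f : Finset (Fin n) → ℝ)
    (hf : ∀ S, f S = (∑ j, mu j * (1 - ∏ r ∈ S, (1 - p r j))) / (∑ r ∈ S, lam r))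
    (Q₁ Q₂ : Finset (Fin n)) (hQ₁ : Q₁.Nonempty) (hQ₂ : Q₂.Nonempty)
    (hmin₁ : ∀ S : Finset (Fin n), S.Nonempty → f Q₁ ≤ f S)
    (hmin₂ : ∀ S : Finset (Fin n), S.Nonempty → f Q₂ ≤ f S)
    (hinter : (Q₁ ∩ Q₂).Nonempty) :
    (∀ S : Finset (Fin n), S.Nonempty → f (Q₁ ∩ Q₂) ≤ f S) ∧
    (∀ S : Finset (Fin n), S.Nonempty → f (Q₁ ∪ Q₂) ≤ f S) := by
  set N : Finset (Fin n) → ℝ := fun S => ∑ j, mu j * (1 - ∏ r ∈ S, (1 - p r j)) with hN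
  set D : Finset (Fin n) → ℝ := fun S => ∑ r ∈ S, lam r with hD
  have hDpos : ∀ S : Finset (Fin n), S.Nonempty → 0 < D S := fun S hS =>
    Finset.sum_pos (fun r _ => hlam r) hS
  set c := f Q₁ with hc
  have hceq : ∀ S : Finset (Fin n), S.Nonempty → f S = N S / D S := fun S _ => hf S
  -- lower bound: c * D S ≤ N S for all nonempty S
  have hlow : ∀ S : Finset (Fin n), S.Nonempty → c * D S ≤ N S := by
    intro S hS
    have := hmin₁ S hS
    rw [hceq S hS, le_div_iff₀ (hDpos S hS)] at this
    exact this
  -- equalities at Q₁, Q₂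
  have hc₂ : f Q₂ = c := le_antisymm (hmin₂ Q₁ hQ₁) (hmin₁ Q₂ hQ₂)
  have heq₁ : N Q₁ = c * D Q₁ := by
    rw [hc, hceq Q₁ hQ₁, div_mul_cancel₀ _ (hDpos Q₁ hQ₁).ne']
  have heq₂ : N Q₂ = c * D Q₂ := by
    rw [← hc₂, hceq Q₂ hQ₂, div_mul_cancel₀]
    exact (hDpos Q₂ hQ₂).ne'
  have hunion : (Q₁ ∪ Q₂).Nonempty := hQ₁.mono Finset.subset_union_left
  -- modularity of D
  have hDmod : D (Q₁ ∪ Q₂) + D (Q₁ ∩ Q₂) = D Q₁ + D Q₂ := Finset.sum_union_inter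
  -- submodularity of N
  have hNsub : N (Q₁ ∩ Q₂) + N (Q₁ ∪ Q₂) ≤ N Q₁ + N Q₂ := by
    rw [hN]
    simp only [← Finset.sum_add_distrib]
    apply Finset.sum_le_sum
    intro j _
    have hq0 : ∀ r, 0 ≤ 1 - p r j := fun r => by linarith [(hp r j).2]
    have hq1 : ∀ r, 1 - p r j ≤ 1 := fun r => by linarith [(hp r j).1]
    set x := ∏ r ∈ Q₁ ∩ Q₂, (1 - p r j)
    set y := ∏ r ∈ Q₁ ∪ Q₂, (1 - p r j)
    set a := ∏ r ∈ Q₁, (1 - p r j)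
    set b := ∏ r ∈ Q₂, (1 - p r j)
    have hkey : a + b ≤ x + y := by
      apply aux_ineq
      · exact Finset.prod_nonneg fun i _ => hq0 i
      · exact Finset.prod_nonneg fun i _ => hq0 i
      · exact Finset.prod_nonneg fun i _ => hq0 i
      · exact Finset.prod_nonneg fun i _ => hq0 i
      · exact aux_prod_subset _ _ _ hq0 hq1 Finset.inter_subset_left
      · exact aux_prod_subset _ _ _ hq0 hq1 Finset.inter_subset_right
      · rw [mul_comm x y]; exact Finset.prod_union_inter
    nlinarith [hmu j]
  -- conclude equalities at intersection and union
  have h1 : c * D (Q₁ ∩ Q₂) ≤ N (Q₁ ∩ Q₂) := hlow _ hinter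
  have h2 : c * D (Q₁ ∪ Q₂) ≤ N (Q₁ ∪ Q₂) := hlow _ hunion
  have hcD : c * D (Q₁ ∪ Q₂) + c * D (Q₁ ∩ Q₂) = c * D Q₁ + c * D Q₂ := by
    rw [← mul_add, ← mul_add, hDmod]
  have e1 : N (Q₁ ∩ Q₂) = c * D (Q₁ ∩ Q₂) := by linarith
  have e2 : N (Q₁ ∪ Q₂) = c * D (Q₁ ∪ Q₂) := by linarith
  constructor
  · intro S hS
    rw [hceq _ hinter, e1, mul_div_assoc, div_self (hDpos _ hinter).ne', mul_one]
    exact hmin₁ S hS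
  · intro S hS
    rw [hceq _ hunion, e2, mul_div_assoc, div_self (hDpos _ hunion).ne', mul_one]
    exact hmin₁ S hS
end

section
/- In a directed acyclic graph with a fixed topological order t : V → ℕ, let z¹_{xy} ≥ 0 satisfy μ_x ∑_{y} z¹_{yx} = ∑_{y} z¹_{xy} μ_y for every intermediate node x, where μ > 0 on servers. Let γ > 1 and define z_{xy} := z¹_{xy} · γ^{(t(x)+1)/(m+1) − 1} where m+1 exceeds all values of t. Then for every intermediate node x with ∑_y z¹_{yx} > 0: μ_x ∑_y z_{yx} < ∑_y z_{xy} μ_y. -/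
theorem stmt_17 (V : Type) [Fintype V] [DecidableEq V]
    (E : Finset (V × V)) (t : V → ℕ) (m : ℕ)
    (ht : ∀ e ∈ E, t e.1 < t e.2)
    (htm : ∀ v, t v ≤ m)
    (mu : V → ℝ) (hmu : ∀ v, 0 < mu v)
    (z1 : V → V → ℝ) (hz1 : ∀ x y, 0 ≤ z1 x y)
    (hsupp : ∀ x y, (x, y) ∉ E → z1 x y = 0)
    (S2 : Finset V)
    (hbal : ∀ x ∈ S2, mu x * ∑ y, z1 y x = ∑ y, z1 x y * mu y)
    (γ : ℝ) (hγ : 1 < γ)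
    (z : V → V → ℝ)
    (hz : ∀ x y, z x y = z1 x y * γ ^ (((t x : ℝ) + 1) / ((m : ℝ) + 1) - 1)) :
    ∀ x ∈ S2, 0 < ∑ y, z1 y x →
      mu x * ∑ y, z y x < ∑ y, z x y * mu y := by
  intro x hx hpos
  have hγ0 : (0:ℝ) < γ := lt_trans one_pos hγ
  have hm : (0:ℝ) < (m:ℝ) + 1 := by positivity
  set ex : ℝ := γ ^ (((t x : ℝ) + 1) / ((m : ℝ) + 1) - 1) with hex
  have hexpos : 0 < ex := Real.rpow_pos_of_pos hγ0 _
  -- each term inequality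
  have hle : ∀ y, z y x ≤ z1 y x * ex := by
    intro y
    rcases eq_or_lt_of_le (hz1 y x) with h0 | h0
    · rw [hz, ← h0]; simp
    · have hE : (y, x) ∈ E := by
        by_contra hne
        exact absurd (hsupp y x hne) (ne_of_gt h0)
      have htyx : t y < t x := ht _ hE
      have hexp : ((t y : ℝ) + 1) / ((m : ℝ) + 1) - 1 < ((t x : ℝ) + 1) / ((m : ℝ) + 1) - 1 := by
        have : ((t y : ℝ) + 1) < ((t x : ℝ) + 1) := by
          have := (Nat.cast_lt (α := ℝ)).2 htyx
          linarith
        gcongr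
      have hlt : γ ^ (((t y : ℝ) + 1) / ((m : ℝ) + 1) - 1) < ex :=
        (Real.rpow_lt_rpow_left_iff hγ).2 hexp
      rw [hz]
      exact le_of_lt (mul_lt_mul_of_pos_left hlt h0)
  have hstrict : ∃ y ∈ (Finset.univ : Finset V), z y x < z1 y x * ex := by
    have : ∃ y ∈ (Finset.univ : Finset V), 0 < z1 y x := by
      by_contra hc
      push_neg at hc
      have : ∑ y, z1 y x ≤ 0 := Finset.sum_nonpos fun y _ => hc y (Finset.mem_univ y)
      linarith
    obtain ⟨y, _, hy⟩ := this
    refine ⟨y, Finset.mem_univ y, ?_⟩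
    have hE : (y, x) ∈ E := by
      by_contra hne
      exact absurd (hsupp y x hne) (ne_of_gt hy)
    have htyx : t y < t x := ht _ hE
    have hexp : ((t y : ℝ) + 1) / ((m : ℝ) + 1) - 1 < ((t x : ℝ) + 1) / ((m : ℝ) + 1) - 1 := by
      have : ((t y : ℝ) + 1) < ((t x : ℝ) + 1) := by
        have := (Nat.cast_lt (α := ℝ)).2 htyx
        linarith
      gcongr
    have hlt : γ ^ (((t y : ℝ) + 1) / ((m : ℝ) + 1) - 1) < ex :=
      (Real.rpow_lt_rpow_left_iff hγ).2 hexp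
    rw [hz]
    exact mul_lt_mul_of_pos_left hlt hy
  have hsum : ∑ y, z y x < ∑ y, z1 y x * ex := by
    obtain ⟨y0, hy0, hy0'⟩ := hstrict
    exact Finset.sum_lt_sum (fun y _ => hle y) ⟨y0, hy0, hy0'⟩
  calc mu x * ∑ y, z y x < mu x * ∑ y, z1 y x * ex :=
        mul_lt_mul_of_pos_left hsum (hmu x)
    _ = (mu x * ∑ y, z1 y x) * ex := by rw [← Finset.sum_mul]; ring
    _ = (∑ y, z1 x y * mu y) * ex := by rw [hbal x hx]
    _ = ∑ y, z x y * mu y := by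
        rw [Finset.sum_mul]
        refine Finset.sum_congr rfl fun y _ => ?_
        rw [hz]; ring
end
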